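/- arXiv:1309.5126 — 6 statements merged into one kernel-verified Lean document; each statement's English description precedes it below -/
import Mathlib

section
/- Let W be a channel from finite set X to finite set Y and let P be a probability distribution on X with P(x) > 0 for all x. Define q_P(y) = Σ_x P(x)W(y|x) and the reverse dispersion V^r(P,W) = Σ_{x,y} P(x)W(y|x) [ln(W(y|x)/q_P(y)) − Σ_z (P(z)W(y|z)/q_P(y)) ln(W(y|z)/q_P(y))]². Then V^r(P,W) = 0 if and only if W is singular, i.e., for all (x,y,z) with W(y|x)W(y|z) > 0 one has W(y|x) = W(y|z). -/
/-!
Both sides are pointwise conditions on the output letters `y`. Vanishing of the sum of nonnegative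
terms says that on the support of `z ↦ P z * W z y` the function `z ↦ log (W z y / q y)` equals its
mean under the posterior weights `P z * W z y / q y`. A function agrees with its weighted mean
everywhere on the support of the weights iff it is constant there, and since `log` is injective on
the positive reals this means that `z ↦ W z y` is constant on its support.
-/

open Finset

section WeightedMean

variable {ι : Type*} [Fintype ι]

lemma sum_mul_sq_eq_zero_iff {w a : ι → ℝ} (hw : ∀ i, 0 ≤ w i) :
    ∑ i, w i * a i ^ 2 = 0 ↔ ∀ i, 0 < w i → a i = 0 := by
  rw [sum_eq_zero_iff_of_nonneg fun i _ => mul_nonneg (hw i) (sq_nonneg _)]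
  refine forall_congr' fun i => ⟨fun h hi => ?_, fun h => ?_⟩
  · simpa [hi.ne'] using h (mem_univ i)
  · rcases (hw i).eq_or_lt with hi | hi
    · simp [← hi]
    · simp [h hi]

lemma sum_div_mul_eq_of_eq_on_support {w f : ι → ℝ} {c : ℝ} (hw : ∑ i, w i ≠ 0)
    (hf : ∀ i, w i ≠ 0 → f i = c) : ∑ i, w i / (∑ j, w j) * f i = c := by
  have hc : ∀ i, w i / (∑ j, w j) * f i = w i / (∑ j, w j) * c := fun i => by
    by_cases hi : w i = 0
    · simp [hi]
    · rw [hf i hi]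
  rw [sum_congr rfl fun i _ => hc i, ← sum_mul, ← sum_div, div_self hw,
    one_mul]

lemma forall_eq_weighted_mean_iff {w g : ι → ℝ} (hw : ∀ i, 0 ≤ w i) :
    (∀ i, 0 < w i → g i = ∑ j, w j / (∑ k, w k) * g j) ↔
      ∀ i j, 0 < w i → 0 < w j → g i = g j := by
  refine ⟨fun h i j hi hj => (h i hi).trans (h j hj).symm, fun h i hi => ?_⟩
  have hS : 0 < ∑ k, w k := hi.trans_le (single_le_sum (fun k _ => hw k) (mem_univ i))
  exact (sum_div_mul_eq_of_eq_on_support hS.ne' fun j hj =>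
    h j i ((hw j).lt_of_ne' hj) hi).symm

end WeightedMean

lemma Real.log_div_eq_log_div_iff {a b c : ℝ} (ha : 0 < a) (hb : 0 < b) (hc : 0 < c) :
    Real.log (a / c) = Real.log (b / c) ↔ a = b := by
  rw [Real.log_div ha.ne' hc.ne', Real.log_div hb.ne' hc.ne', sub_left_inj]
  exact Real.log_injOn_pos.eq_iff ha hb

theorem stmt0_general {X Y : Type*} [Fintype X] [Fintype Y]
    (W : X → Y → ℝ) (hW0 : ∀ x y, 0 ≤ W x y)
    (P : X → ℝ) (hP0 : ∀ x, 0 < P x) :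
    (∑ x, ∑ y, P x * W x y *
        (Real.log (W x y / (∑ z, P z * W z y)) -
          ∑ z, (P z * W z y / (∑ z', P z' * W z' y)) *
            Real.log (W z y / (∑ z', P z' * W z' y))) ^ 2 = 0)
    ↔ (∀ x y z, 0 < W x y * W z y → W x y = W z y) := by
  have hw : ∀ x y, 0 ≤ P x * W x y := fun x y => mul_nonneg (hP0 x).le (hW0 x y)
  have hsupp : ∀ x y, 0 < P x * W x y ↔ 0 < W x y := fun x y => mul_pos_iff_of_pos_left (hP0 x)
  have hq : ∀ x y, 0 < W x y → 0 < ∑ z, P z * W z y := fun x y hxy =>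
    ((hsupp x y).2 hxy).trans_le (single_le_sum (fun z _ => hw z y) (mem_univ x))
  rw [sum_eq_zero_iff_of_nonneg fun x _ =>
    sum_nonneg fun y _ => mul_nonneg (hw x y) (sq_nonneg _)]
  simp only [mem_univ, true_implies, sum_mul_sq_eq_zero_iff (hw _), sub_eq_zero]
  rw [forall_comm]
  conv_rhs => rw [forall_comm]
  refine forall_congr' fun y => (forall_eq_weighted_mean_iff (g := fun z =>
    Real.log (W z y / ∑ z', P z' * W z' y)) (hw · y)).trans ?_
  refine forall_congr' fun x => forall_congr' fun z => ?_
  rw [hsupp, hsupp, mul_pos_iff, or_iff_left fun h => (hW0 x y).not_gt h.1,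
    ← and_imp]
  exact imp_congr_right fun ⟨hx, hz⟩ => Real.log_div_eq_log_div_iff hx hz (hq x y hx)

theorem stmt0 {X Y : Type*} [Fintype X] [Fintype Y] [Nonempty X] [Nonempty Y]
    (W : X → Y → ℝ) (hW0 : ∀ x y, 0 ≤ W x y) (hW1 : ∀ x, ∑ y, W x y = 1)
    (P : X → ℝ) (hP0 : ∀ x, 0 < P x) (hP1 : ∑ x, P x = 1) :
    (∑ x, ∑ y, P x * W x y *
        (Real.log (W x y / (∑ z, P z * W z y)) -
          ∑ z, (P z * W z y / (∑ z', P z' * W z' y)) *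
            Real.log (W z y / (∑ z', P z' * W z' y))) ^ 2 = 0)
    ↔ (∀ x y z, 0 < W x y * W z y → W x y = W z y) :=
  stmt0_general W hW0 P hP0
end

section
/- Let W be a channel from X to Y and P a distribution on X with P(x) > 0 for all x. Then V^r(P,W) = 0 holds if and only if for every y ∈ Y and every x ∈ X with W(y|x) > 0, one has ln W(y|x) = Σ_z (P(z)W(y|z)/q_P(y)) ln W(y|z), where q_P(y) = Σ_z P(z)W(y|z). -/
/-!
`V^r(P,W)` is a sum of the nonnegative terms `P(x) W(y|x) · (bracket)²`, so it vanishes iff every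
bracket with `W(y|x) > 0` does. In such a bracket the normalisation `q_P(y)` cancels, because the
weights `P(z) W(y|z) / q_P(y)` sum to one and vanish wherever `W(y|z) = 0`.
-/

open Finset

theorem Real.log_div_sub_sum_mul_log_div {ι : Type*} (s : Finset ι) {w a : ι → ℝ} {b c : ℝ}
    (hb : b ≠ 0) (hc : c ≠ 0) (hw : ∀ i ∈ s, a i = 0 → w i = 0) (hsum : ∑ i ∈ s, w i = 1) :
    Real.log (b / c) - ∑ i ∈ s, w i * Real.log (a i / c) =
      Real.log b - ∑ i ∈ s, w i * Real.log (a i) := by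
  have hterm : ∀ i ∈ s, w i * Real.log (a i / c) = w i * Real.log (a i) - w i * Real.log c := by
    intro i hi
    by_cases ha : a i = 0
    · simp [hw i hi ha]
    · rw [Real.log_div ha hc]; ring
  rw [sum_congr rfl hterm, sum_sub_distrib, ← sum_mul, hsum, Real.log_div hb hc]
  ring

theorem Fintype.sum_sum_eq_zero_iff_of_nonneg {α β M : Type*} [Fintype α] [Fintype β]
    [AddCommMonoid M] [PartialOrder M] [IsOrderedAddMonoid M] {f : α → β → M}
    (hf : ∀ a b, 0 ≤ f a b) : ∑ a, ∑ b, f a b = 0 ↔ ∀ a b, f a b = 0 := by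
  rw [Finset.sum_eq_zero_iff_of_nonneg fun a _ => Finset.sum_nonneg fun b _ => hf a b]
  simp only [mem_univ, true_implies, Finset.sum_eq_zero_iff_of_nonneg fun b _ => hf _ b]

theorem stmt1_general {X Y : Type*} [Fintype X] [Fintype Y]
    (W : X → Y → ℝ) (hW0 : ∀ x y, 0 ≤ W x y)
    (P : X → ℝ) (hP0 : ∀ x, 0 < P x) :
    (∑ x, ∑ y, P x * W x y *
        (Real.log (W x y / (∑ z, P z * W z y)) -
          ∑ z, (P z * W z y / (∑ z', P z' * W z' y)) *
            Real.log (W z y / (∑ z', P z' * W z' y))) ^ 2 = 0)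
    ↔ (∀ y x, 0 < W x y →
        Real.log (W x y) =
          ∑ z, (P z * W z y / (∑ z', P z' * W z' y)) * Real.log (W z y)) := by
  rw [Fintype.sum_sum_eq_zero_iff_of_nonneg
    fun x y => mul_nonneg (mul_nonneg (hP0 x).le (hW0 x y)) (sq_nonneg _), forall_comm]
  refine forall_congr' fun y => forall_congr' fun x => ?_
  rcases (hW0 x y).eq_or_lt with hzero | hpos
  · simp [← hzero]
  have hq : 0 < ∑ z, P z * W z y := (mul_pos (hP0 x) hpos).trans_le
    (single_le_sum (fun z _ => mul_nonneg (hP0 z).le (hW0 z y)) (mem_univ x))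
  rw [Real.log_div_sub_sum_mul_log_div univ hpos.ne' hq.ne' (fun z _ h => by simp [h])
    (by rw [← sum_div, div_self hq.ne'])]
  simp [hpos, hpos.ne', (hP0 x).ne', sub_eq_zero]

theorem stmt1 {X Y : Type*} [Fintype X] [Fintype Y] [Nonempty X] [Nonempty Y]
    (W : X → Y → ℝ) (hW0 : ∀ x y, 0 ≤ W x y) (hW1 : ∀ x, ∑ y, W x y = 1)
    (P : X → ℝ) (hP0 : ∀ x, 0 < P x) (hP1 : ∑ x, P x = 1) :
    (∑ x, ∑ y, P x * W x y *
        (Real.log (W x y / (∑ z, P z * W z y)) -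
          ∑ z, (P z * W z y / (∑ z', P z' * W z' y)) *
            Real.log (W z y / (∑ z', P z' * W z' y))) ^ 2 = 0)
    ↔ (∀ y x, 0 < W x y →
        Real.log (W x y) =
          ∑ z, (P z * W z y / (∑ z', P z' * W z' y)) * Real.log (W z y)) :=
  stmt1_general W hW0 P hP0
end

section
/- Let W be a singular channel from X to Y, n a positive integer, Q a distribution on X, and R ≥ 0. Define α_y(Q) = Σ_{x:W(y|x)>0} Q(x), q_Q(y) = Σ_x Q(x)W(y|x), and S_R(Q) = { y^n ∈ Yⁿ : (1/n) Σᵢ ln(1/α_{yᵢ}(Q)) ≤ R }. Consider a code with M messages, codewords x^n(1),…,x^n(M) ∈ Xⁿ and disjoint decoding regions A₁,…,A_M covering Yⁿ, with average error probability P̄_e = (1/M) Σ_m W(A_mᶜ | x^n(m)). Suppose there is z^n ∈ Xⁿ such that W(S_R(Q)|x^n(m)) = W(S_R(Q)|z^n) for all m, and q_Q(y) > 0 whenever W(y|x) > 0 for some letter x appearing in some codeword. If M ≥ e^{nR}, then P̄_e ≥ W(S_R(Q)|z^n) − Σ_{y^n ∈ S_R(Q)} q_Q(y^n) · exp(−n[R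 − (1/n)Σᵢ ln(1/α_{yᵢ}(Q))]), where q_Q(y^n) = Πᵢ q_Q(yᵢ) and W(y^n|x^n) = Πᵢ W(yᵢ|xᵢ). -/
/-!
On a singular channel every positive transition probability is determined by the output letter:
`W(y|x) = q_Q(y) / α_y(Q)`. Hence `W(yⁿ|xⁿ) ≤ q_Q(yⁿ) · exp(Σᵢ ln(1/α_{yᵢ}(Q)))` for every input
sequence, with equality unless `W(yⁿ|xⁿ) = 0`. Since the decoding regions are disjoint, summing this
bound over the correctly decoded part of `S_R(Q)` counts each `yⁿ ∈ S_R(Q)` at most once, so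
`M · P̄_e ≥ M · W(S_R(Q)|zⁿ) - Σ_{yⁿ ∈ S_R(Q)} q_Q(yⁿ) · exp(Σᵢ ln(1/α_{yᵢ}(Q)))`; dividing by
`M ≥ e^{nR}` gives the claim.
-/

open Finset Function

section SingularChannel

def IsSingularChannel {X Y : Type*} (W : X → Y → ℝ) : Prop :=
  ∀ x y z, 0 < W x y * W z y → W x y = W z y

variable {X Y : Type*} [Fintype X]

/-- `q_Q(y)` in the paper. -/
noncomputable def outputProb (W : X → Y → ℝ) (Q : X → ℝ) (y : Y) : ℝ := ∑ x, Q x * W x y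

/-- `α_y(Q)` in the paper. -/
noncomputable def reachingMass (W : X → Y → ℝ) (Q : X → ℝ) (y : Y) : ℝ :=
  ∑ x ∈ univ.filter (fun x => 0 < W x y), Q x

variable {W : X → Y → ℝ} {Q : X → ℝ}

theorem outputProb_nonneg (hW0 : ∀ x y, 0 ≤ W x y) (hQ0 : ∀ x, 0 ≤ Q x) (y : Y) :
    0 ≤ outputProb W Q y :=
  sum_nonneg fun x _ => mul_nonneg (hQ0 x) (hW0 x y)

theorem IsSingularChannel.outputProb_eq (hsing : IsSingularChannel W) (hW0 : ∀ x y, 0 ≤ W x y)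
    {x : X} {y : Y} (hxy : 0 < W x y) :
    outputProb W Q y = W x y * reachingMass W Q y := by
  rw [outputProb, reachingMass, sum_filter, mul_sum]
  refine sum_congr rfl fun z _ => ?_
  split_ifs with hzy
  · rw [hsing x y z (mul_pos hxy hzy)]
    ring
  · simp [le_antisymm (not_lt.mp hzy) (hW0 z y)]

theorem IsSingularChannel.le_outputProb_mul_exp_log (hsing : IsSingularChannel W)
    (hW0 : ∀ x y, 0 ≤ W x y) (hQ0 : ∀ x, 0 ≤ Q x) {x : X} {y : Y}
    (hq : 0 < W x y → 0 < outputProb W Q y) :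
    W x y ≤ outputProb W Q y * Real.exp (Real.log (1 / reachingMass W Q y)) := by
  rcases (hW0 x y).lt_or_eq with hxy | hxy
  · have hqα := hsing.outputProb_eq (Q := Q) hW0 hxy
    have hα : 0 < reachingMass W Q y := pos_of_mul_pos_right (hqα ▸ hq hxy) (hW0 x y)
    rw [Real.exp_log (one_div_pos.mpr hα), hqα, mul_one_div, mul_div_cancel_right₀ _ hα.ne']
  · rw [← hxy]
    exact mul_nonneg (outputProb_nonneg hW0 hQ0 y) (Real.exp_pos _).le

theorem IsSingularChannel.prod_le_prod_outputProb_mul_exp_sum_log {ι : Type*} [Fintype ι]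
    (hsing : IsSingularChannel W) (hW0 : ∀ x y, 0 ≤ W x y) (hQ0 : ∀ x, 0 ≤ Q x)
    (xs : ι → X) (ys : ι → Y) (hq : ∀ i, 0 < W (xs i) (ys i) → 0 < outputProb W Q (ys i)) :
    ∏ i, W (xs i) (ys i) ≤
      (∏ i, outputProb W Q (ys i)) * Real.exp (∑ i, Real.log (1 / reachingMass W Q (ys i))) := by
  rw [Real.exp_sum, ← prod_mul_distrib]
  exact prod_le_prod (fun i _ => hW0 _ _)
    fun i _ => hsing.le_outputProb_mul_exp_log hW0 hQ0 (hq i)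

end SingularChannel

theorem card_mul_sub_sum_le_sum_sum_compl {ι α : Type*} [Fintype ι] [Fintype α] [DecidableEq α]
    (P : ι → α → ℝ) (g : α → ℝ) (S : Finset α) (A : ι → Finset α) (w : ℝ)
    (hP : ∀ m a, 0 ≤ P m a) (hg : ∀ a, 0 ≤ g a) (hPg : ∀ m a, P m a ≤ g a)
    (hdisj : Pairwise (Disjoint on A)) (hw : ∀ m, ∑ a ∈ S, P m a = w) :
    Fintype.card ι * w - ∑ a ∈ S, g a ≤ ∑ m, ∑ a ∈ (A m)ᶜ, P m a := by
  have hcorrect : ∑ m, ∑ a ∈ S ∩ A m, P m a ≤ ∑ a ∈ S, g a :=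
    calc ∑ m, ∑ a ∈ S ∩ A m, P m a
        ≤ ∑ m, ∑ a ∈ S ∩ A m, g a := sum_le_sum fun m _ => sum_le_sum fun a _ => hPg m a
      _ = ∑ a ∈ univ.biUnion (fun m => S ∩ A m), g a :=
          (sum_biUnion fun m _ m' _ h => (hdisj h).mono inter_subset_right inter_subset_right).symm
      _ ≤ ∑ a ∈ S, g a :=
          sum_le_sum_of_subset_of_nonneg (biUnion_subset.mpr fun m _ => inter_subset_left)
            fun a _ _ => hg a
  have hwrong : ∀ m, w - ∑ a ∈ S ∩ A m, P m a ≤ ∑ a ∈ (A m)ᶜ, P m a := fun m => by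
    rw [← hw m, ← sum_inter_add_sum_sdiff S (A m), add_sub_cancel_left]
    exact sum_le_sum_of_subset_of_nonneg (fun a ha => mem_compl.mpr (mem_sdiff.mp ha).2)
      fun a _ _ => hP m a
  calc Fintype.card ι * w - ∑ a ∈ S, g a ≤ ∑ m, (w - ∑ a ∈ S ∩ A m, P m a) := by
        rw [sum_sub_distrib, sum_const, card_univ, nsmul_eq_mul]
        linarith
    _ ≤ ∑ m, ∑ a ∈ (A m)ᶜ, P m a := sum_le_sum fun m _ => hwrong m

theorem sub_exp_neg_mul_le_inv_mul {M r w G E : ℝ} (hG : 0 ≤ G) (hM : Real.exp r ≤ M)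
    (h : M * w - G ≤ E) : w - Real.exp (-r) * G ≤ M⁻¹ * E := by
  have hMpos : 0 < M := (Real.exp_pos r).trans_le hM
  have hMinv : M⁻¹ ≤ Real.exp (-r) := Real.exp_neg r ▸ inv_anti₀ (Real.exp_pos r) hM
  calc w - Real.exp (-r) * G ≤ w - M⁻¹ * G := by gcongr
    _ = M⁻¹ * (M * w - G) := by field_simp
    _ ≤ M⁻¹ * E := by gcongr

theorem stmt7_general {X Y : Type*} [Fintype X] [Fintype Y] [DecidableEq Y]
    (W : X → Y → ℝ) (hW0 : ∀ x y, 0 ≤ W x y)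
    (hsing : ∀ x y z, 0 < W x y * W z y → W x y = W z y)
    (n : ℕ)
    (Q : X → ℝ) (hQ0 : ∀ x, 0 ≤ Q x)
    (R : ℝ)
    (M : ℕ)
    (cw : Fin M → Fin n → X) (A : Fin M → Finset (Fin n → Y))
    (hdisj : ∀ m m', m ≠ m' → Disjoint (A m) (A m'))
    -- `S_R(Q)` : output sequences whose empirical `-log α` is at most `R`
    (SR : Finset (Fin n → Y))
    (zn : Fin n → X)
    (hz : ∀ m, ∑ yn ∈ SR, ∏ i, W (cw m i) (yn i) = ∑ yn ∈ SR, ∏ i, W (zn i) (yn i))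
    (hdom : ∀ x' : X, (∃ m i, cw m i = x') →
      ∀ y, 0 < W x' y → 0 < ∑ x, Q x * W x y)
    (hMrate : Real.exp (n * R) ≤ (M : ℝ)) :
    (M : ℝ)⁻¹ * ∑ m, ∑ yn ∈ (A m)ᶜ, ∏ i, W (cw m i) (yn i)
      ≥ (∑ yn ∈ SR, ∏ i, W (zn i) (yn i))
        - ∑ yn ∈ SR, (∏ i, (∑ x, Q x * W x (yn i))) *
            Real.exp (-(n * R - ∑ i, Real.log
              (1 / (∑ x ∈ Finset.univ.filter (fun x => 0 < W x (yn i)), Q x)))) := by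
  set B : (Fin n → Y) → ℝ := fun yn => (∏ i, outputProb W Q (yn i)) *
    Real.exp (∑ i, Real.log (1 / reachingMass W Q (yn i)))
  have hB : ∀ m yn, ∏ i, W (cw m i) (yn i) ≤ B yn := fun m yn =>
    IsSingularChannel.prod_le_prod_outputProb_mul_exp_sum_log hsing hW0 hQ0 _ _
      fun i => hdom _ ⟨m, i, rfl⟩ _
  have hB0 : ∀ yn, 0 ≤ B yn := fun yn =>
    mul_nonneg (prod_nonneg fun i _ => outputProb_nonneg hW0 hQ0 _) (Real.exp_pos _).le
  have hcount := card_mul_sub_sum_le_sum_sum_compl _ B SR A _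
    (fun m yn => prod_nonneg fun i _ => hW0 _ _) hB0 hB hdisj hz
  rw [Fintype.card_fin] at hcount
  have hrate : Real.exp (-(n * R)) * ∑ yn ∈ SR, B yn =
      ∑ yn ∈ SR, (∏ i, (∑ x, Q x * W x (yn i))) * Real.exp (-(n * R - ∑ i, Real.log
        (1 / (∑ x ∈ Finset.univ.filter (fun x => 0 < W x (yn i)), Q x)))) := by
    rw [mul_sum]
    refine sum_congr rfl fun yn _ => ?_
    simp only [B, outputProb, reachingMass]
    rw [neg_sub, Real.exp_sub, Real.exp_neg, div_eq_mul_inv]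
    ring
  rw [← hrate]
  exact sub_exp_neg_mul_le_inv_mul (sum_nonneg fun yn _ => hB0 yn) hMrate hcount

theorem stmt7 {X Y : Type*} [Fintype X] [Fintype Y] [DecidableEq X] [DecidableEq Y]
    [Nonempty X] [Nonempty Y]
    (W : X → Y → ℝ) (hW0 : ∀ x y, 0 ≤ W x y) (hW1 : ∀ x, ∑ y, W x y = 1)
    (hsing : ∀ x y z, 0 < W x y * W z y → W x y = W z y)
    (n : ℕ) (hn : 0 < n)
    (Q : X → ℝ) (hQ0 : ∀ x, 0 ≤ Q x) (hQ1 : ∑ x, Q x = 1)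
    (R : ℝ) (hR : 0 ≤ R)
    (M : ℕ) (hM : 0 < M)
    (cw : Fin M → Fin n → X) (A : Fin M → Finset (Fin n → Y))
    (hdisj : ∀ m m', m ≠ m' → Disjoint (A m) (A m'))
    (hcover : ∀ yn : Fin n → Y, ∃ m, yn ∈ A m)
    -- `S_R(Q)` : output sequences whose empirical `-log α` is at most `R`
    (SR : Finset (Fin n → Y))
    (hSR : SR = Finset.univ.filter (fun yn : Fin n → Y =>
      (1 / (n : ℝ)) * ∑ i, Real.log
        (1 / (∑ x ∈ Finset.univ.filter (fun x => 0 < W x (yn i)), Q x)) ≤ R))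
    (zn : Fin n → X)
    (hz : ∀ m, ∑ yn ∈ SR, ∏ i, W (cw m i) (yn i) = ∑ yn ∈ SR, ∏ i, W (zn i) (yn i))
    (hdom : ∀ x' : X, (∃ m i, cw m i = x') →
      ∀ y, 0 < W x' y → 0 < ∑ x, Q x * W x y)
    (hMrate : Real.exp (n * R) ≤ (M : ℝ)) :
    (M : ℝ)⁻¹ * ∑ m, ∑ yn ∈ (A m)ᶜ, ∏ i, W (cw m i) (yn i)
      ≥ (∑ yn ∈ SR, ∏ i, W (zn i) (yn i))
        - ∑ yn ∈ SR, (∏ i, (∑ x, Q x * W x (yn i))) *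
            Real.exp (-(n * R - ∑ i, Real.log
              (1 / (∑ x ∈ Finset.univ.filter (fun x => 0 < W x (yn i)), Q x)))) :=
  stmt7_general W hW0 hsing n Q hQ0 R M cw A hdisj SR zn hz hdom hMrate
end

section
/- Let W be a symmetric and singular channel with no all-zero column, q the uniform-input output distribution, α_y = Σ_{x:W(y|x)>0} 1/|X|, and x₀ ∈ X fixed. Then, with Y ∼ q: E[−ln α_Y] = C(W), Var[−ln α_Y] = Var_{Y∼W(·|x₀)}[ln(W(Y|x₀)/q(Y))], and E[|−ln α_Y − C(W)|³] = E_{Y∼W(·|x₀)}[|ln(W(Y|x₀)/q(Y)) − C(W)|³]. In other words, −ln α_Y under the output distribution q has the same first three (absolute central) moments as the information density under any input. -/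
/-! On a singular channel every nonzero entry of column `y` equals `W x y`, so the uniform-input
output probability is `q y = α y * W x y` and the information density `ln (W x y / q y)` equals
`-ln α y` wherever `W x y > 0`. Gallager symmetry makes `α` constant on the classes of outputs, and
every row is a permutation of every other row within each class; hence the `W x`-average of any
function of `-ln α` is the same for all inputs `x` and equals its `q`-average. This gives all three
moment identities, and it also shows that every input has the same divergence `D(W x ‖ q)`, which
forces the uniform input to achieve capacity. -/

open Finset
/-- Mutual information `I(P;W)` of a channel `W` under input distribution `P`. -/
noncomputable def mutualInfo {X Y : Type*} [Fintype X] [Fintype Y]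
    (P : X → ℝ) (W : X → Y → ℝ) : ℝ :=
  ∑ x, ∑ y, P x * W x y * Real.log (W x y / ∑ z, P z * W z y)

/-- Channel capacity `C(W) = max_P I(P;W)`. -/
noncomputable def capacity {X Y : Type*} [Fintype X] [Fintype Y]
    (W : X → Y → ℝ) : ℝ :=
  sSup {c : ℝ | ∃ P : X → ℝ, (∀ x, 0 ≤ P x) ∧ (∑ x, P x = 1) ∧ c = mutualInfo P W}

/-- Gallager symmetry. -/
def GallagerSymmetric {X Y : Type*} (W : X → Y → ℝ) : Prop :=
  ∃ (ι : Type) (c : Y → ι),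
    (∀ (l : ι) (x x' : X), ∃ σ : {y : Y // c y = l} ≃ {y : Y // c y = l},
        ∀ y : {y : Y // c y = l}, W x' (σ y).1 = W x y.1) ∧
    (∀ (y y' : Y), c y = c y' → ∃ τ : X ≃ X, ∀ x, W (τ x) y' = W x y)

open Real

section Channel

variable {X Y : Type*}

section Symmetry

variable {ι : Type*} {W : X → Y → ℝ} {c : Y → ι} {x x' : X}

lemma exists_perm_of_forall_fiber_perm
    (hrow : ∀ l, ∃ σ : {y : Y // c y = l} ≃ {y : Y // c y = l},
      ∀ y : {y : Y // c y = l}, W x' (σ y).1 = W x y.1) :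
    ∃ τ : Equiv.Perm Y, ∀ y, c (τ y) = c y ∧ W x' (τ y) = W x y := by
  choose σ hσ using hrow
  exact ⟨(Equiv.sigmaFiberEquiv c).symm.trans
      ((Equiv.sigmaCongrRight σ).trans (Equiv.sigmaFiberEquiv c)),
    fun y => ⟨(σ (c y) ⟨y, rfl⟩).2, hσ _ ⟨y, rfl⟩⟩⟩

lemma sum_mul_eq_of_forall_fiber_perm [Fintype Y]
    (hrow : ∀ l, ∃ σ : {y : Y // c y = l} ≃ {y : Y // c y = l},
      ∀ y : {y : Y // c y = l}, W x' (σ y).1 = W x y.1)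
    {h : Y → ℝ} (hh : ∀ y y', c y = c y' → h y = h y') :
    ∑ y, W x y * h y = ∑ y, W x' y * h y := by
  obtain ⟨τ, hτ⟩ := exists_perm_of_forall_fiber_perm hrow
  rw [← Equiv.sum_comp τ (fun y => W x' y * h y)]
  exact sum_congr rfl fun y _ => by rw [(hτ y).2, hh _ _ (hτ y).1]

end Symmetry

lemma card_filter_pos_eq_of_perm [Fintype X] {W : X → Y → ℝ} {y y' : Y} (τ : X ≃ X)
    (hτ : ∀ x, W (τ x) y' = W x y) :
    #{x | 0 < W x y} = #{x | 0 < W x y'} :=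
  card_equiv τ (by simp [hτ])

lemma sum_eq_card_filter_pos_mul [Fintype X] {v : X → ℝ} (hv0 : ∀ x, 0 ≤ v x) {a : ℝ}
    (hv : ∀ x, 0 < v x → v x = a) :
    ∑ x, v x = #{x | 0 < v x} * a := by
  rw [← sum_filter_of_ne (fun x _ hx => (hv0 x).lt_of_ne' hx), ← nsmul_eq_mul, ← sum_const]
  exact sum_congr rfl fun x hx => hv x (mem_filter.1 hx).2

lemma sum_mixture_mul [Fintype X] [Fintype Y] (P : X → ℝ) (W : X → Y → ℝ) (h : Y → ℝ) :
    ∑ y, (∑ x, P x * W x y) * h y = ∑ x, P x * ∑ y, W x y * h y := by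
  simp_rw [sum_mul, mul_sum, mul_assoc]
  exact sum_comm

lemma mul_log_div_le_sub {a b : ℝ} (ha : 0 ≤ a) (hb : 0 < b) : a * log (b / a) ≤ b - a := by
  rcases ha.eq_or_lt with rfl | ha
  · simpa using hb.le
  · calc a * log (b / a) ≤ a * (b / a - 1) :=
          mul_le_mul_of_nonneg_left (log_le_sub_one_of_pos (div_pos hb ha)) ha.le
      _ = b - a := by field_simp

theorem mutualInfo_le_sum_mul_sum_log_div [Fintype X] [Fintype Y] {P : X → ℝ} (hP0 : ∀ x, 0 ≤ P x)
    (hP1 : ∑ x, P x = 1) {W : X → Y → ℝ} (hW0 : ∀ x y, 0 ≤ W x y) (hW1 : ∀ x, ∑ y, W x y = 1)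
    {Q : Y → ℝ} (hQ0 : ∀ y, 0 < Q y) (hQ1 : ∑ y, Q y ≤ 1) :
    mutualInfo P W ≤ ∑ x, P x * ∑ y, W x y * log (W x y / Q y) := by
  set A : Y → ℝ := fun y => ∑ z, P z * W z y with hA
  have hA0 : ∀ y, 0 ≤ A y := fun y => sum_nonneg fun z _ => mul_nonneg (hP0 z) (hW0 z y)
  have hA1 : ∑ y, A y = 1 := by
    rw [hA, sum_comm]
    simp_rw [← mul_sum, hW1, mul_one, hP1]
  have hsplit : ∀ x y, P x * W x y * log (W x y / A y)
      = P x * W x y * log (W x y / Q y) + P x * W x y * log (Q y / A y) := by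
    intro x y
    rcases (mul_nonneg (hP0 x) (hW0 x y)).eq_or_lt with h | h
    · rw [← h]; ring
    · have hW : 0 < W x y := pos_of_mul_pos_right h (hP0 x)
      have hAy : 0 < A y := h.trans_le (single_le_sum (fun z _ => mul_nonneg (hP0 z) (hW0 z y))
        (mem_univ x))
      rw [← mul_add, ← log_mul (div_pos hW (hQ0 y)).ne' (div_pos (hQ0 y) hAy).ne',
        div_mul_div_cancel₀ (hQ0 y).ne']
  have hgibbs : ∑ y, A y * log (Q y / A y) ≤ 0 := by
    calc ∑ y, A y * log (Q y / A y) ≤ ∑ y, (Q y - A y) :=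
          sum_le_sum fun y _ => mul_log_div_le_sub (hA0 y) (hQ0 y)
      _ ≤ 0 := by rw [sum_sub_distrib, hA1]; linarith
  calc mutualInfo P W
      = ∑ x, P x * ∑ y, W x y * log (W x y / Q y) + ∑ y, A y * log (Q y / A y) := by
        have hA_apply : ∀ y, ∑ z, P z * W z y = A y := fun _ => rfl
        simp_rw [mutualInfo, hA_apply, hsplit, sum_add_distrib, mul_assoc, ← mul_sum]
        rw [← sum_mixture_mul]
    _ ≤ ∑ x, P x * ∑ y, W x y * log (W x y / Q y) := by linarith

theorem capacity_eq_of_forall_sum_mul_log_div_eq [Fintype X] [Fintype Y] {P : X → ℝ}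
    (hP0 : ∀ x, 0 ≤ P x) (hP1 : ∑ x, P x = 1) {W : X → Y → ℝ} (hW0 : ∀ x y, 0 ≤ W x y) (hW1 : ∀ x, ∑ y, W x y = 1)
    (hQ0 : ∀ y, 0 < ∑ x, P x * W x y) {C : ℝ}
    (hC : ∀ x, ∑ y, W x y * log (W x y / ∑ z, P z * W z y) = C) :
    capacity W = C := by
  have hQ1 : ∑ y, ∑ x, P x * W x y = 1 := by
    rw [sum_comm]
    simp_rw [← mul_sum, hW1, mul_one, hP1]
  refine IsGreatest.csSup_eq ⟨⟨P, hP0, hP1, ?_⟩, ?_⟩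
  · simp_rw [mutualInfo, mul_assoc, ← mul_sum, hC, ← sum_mul, hP1, one_mul]
  · rintro _ ⟨P', hP'0, hP'1, rfl⟩
    calc mutualInfo P' W ≤ ∑ x, P' x * ∑ y, W x y * log (W x y / ∑ z, P z * W z y) :=
          mutualInfo_le_sum_mul_sum_log_div hP'0 hP'1 hW0 hW1 hQ0 hQ1.le
      _ = C := by simp_rw [hC, ← sum_mul, hP'1, one_mul]

theorem sum_mul_comp_log_div_eq_sum_mul_comp_neg_log [Fintype X] [Fintype Y]
    {W : X → Y → ℝ} (hW0 : ∀ x y, 0 ≤ W x y)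
    (hsym : GallagerSymmetric W) (hsing : ∀ x y z, 0 < W x y * W z y → W x y = W z y)
    {q : Y → ℝ} (hq : ∀ y, q y = ∑ x, ((Fintype.card X : ℝ))⁻¹ * W x y)
    {α : Y → ℝ} (hα : ∀ y, α y = ∑ _x ∈ Finset.univ.filter (fun x => 0 < W x y),
      ((Fintype.card X : ℝ))⁻¹)
    (g : ℝ → ℝ) (x : X) :
    ∑ y, W x y * g (log (W x y / q y)) = ∑ y, q y * g (-log (α y)) := by
  obtain ⟨ι, c, hrow, hcol⟩ := hsym
  have hα_card : ∀ y, α y = #{x | 0 < W x y} * (Fintype.card X : ℝ)⁻¹ := by simp [hα]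
  have hαc : ∀ y y', c y = c y' → α y = α y' := fun y y' hyy' => by
    obtain ⟨τ, hτ⟩ := hcol y y' hyy'
    rw [hα_card, hα_card, card_filter_pos_eq_of_perm τ hτ]
  have hqα : ∀ y, 0 < W x y → q y = α y * W x y := fun y hxy => by
    rw [hq, ← mul_sum, hα_card,
      sum_eq_card_filter_pos_mul (hW0 · y) fun z hz => hsing z y x (mul_pos hz hxy)]
    ring
  have hdensity : ∀ y, 0 < W x y → log (W x y / q y) = -log (α y) := fun y hxy => by
    rw [hqα y hxy, div_mul_cancel_right₀ hxy.ne', log_inv]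
  have : Nonempty X := ⟨x⟩
  calc ∑ y, W x y * g (log (W x y / q y)) = ∑ y, W x y * g (-log (α y)) :=
        sum_congr rfl fun y _ => by
          rcases (hW0 x y).eq_or_lt with h | h
          · rw [← h, zero_mul, zero_mul]
          · rw [hdensity y h]
    _ = ∑ y, q y * g (-log (α y)) := by
        have hrows : ∀ x', ∑ y, W x' y * g (-log (α y)) = ∑ y, W x y * g (-log (α y)) :=
          fun x' => sum_mul_eq_of_forall_fiber_perm (hrow · _ x) fun y y' hyy' => by
            rw [hαc y y' hyy']
        simp_rw [hq, sum_mixture_mul, hrows, ← sum_mul]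
        simp

end Channel

theorem stmt10_general {X Y : Type*} [Fintype X] [Fintype Y] [Nonempty X]
    (W : X → Y → ℝ) (hW0 : ∀ x y, 0 ≤ W x y) (hW1 : ∀ x, ∑ y, W x y = 1)
    (hsym : GallagerSymmetric W)
    (hsing : ∀ x y z, 0 < W x y * W z y → W x y = W z y)
    (hcol : ∀ y, ∃ x, 0 < W x y)
    (q : Y → ℝ) (hq : ∀ y, q y = ∑ x, ((Fintype.card X : ℝ))⁻¹ * W x y)
    (α : Y → ℝ)
    (hα : ∀ y, α y = ∑ _x ∈ Finset.univ.filter (fun x => 0 < W x y),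
      ((Fintype.card X : ℝ))⁻¹)
    (x₀ : X) :
    (∑ y, q y * (-Real.log (α y)) = capacity W) ∧
    (∑ y, q y * (Real.log (α y)) ^ 2 - (∑ y, q y * Real.log (α y)) ^ 2
      = ∑ y, W x₀ y * (Real.log (W x₀ y / q y)) ^ 2
        - (∑ y, W x₀ y * Real.log (W x₀ y / q y)) ^ 2) ∧
    (∑ y, q y * |(-Real.log (α y)) - capacity W| ^ 3
      = ∑ y, W x₀ y * |Real.log (W x₀ y / q y) - capacity W| ^ 3) := by
  have htransfer := sum_mul_comp_log_div_eq_sum_mul_comp_neg_log hW0 hsym hsing hq hα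
  have hcap : capacity W = ∑ y, q y * (-log (α y)) := by
    refine capacity_eq_of_forall_sum_mul_log_div_eq (P := fun _ => (Fintype.card X : ℝ)⁻¹)
      (fun _ => by positivity) (by simp) hW0 hW1 (fun y => ?_) fun x => ?_
    · obtain ⟨x, hx⟩ := hcol y
      exact sum_pos' (fun z _ => mul_nonneg (by positivity) (hW0 z y))
        ⟨x, mem_univ x, mul_pos (by positivity) hx⟩
    · simp_rw [← hq]
      exact htransfer id x
  refine ⟨hcap.symm, ?_, (htransfer (fun t => |t - capacity W| ^ 3) x₀).symm⟩
  have hmean : ∑ y, W x₀ y * log (W x₀ y / q y) = ∑ y, q y * -log (α y) := htransfer id x₀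
  rw [htransfer (· ^ 2) x₀, hmean]
  simp [sum_neg_distrib]

theorem stmt10 {X Y : Type*} [Fintype X] [Fintype Y] [Nonempty X] [Nonempty Y]
    (W : X → Y → ℝ) (hW0 : ∀ x y, 0 ≤ W x y) (hW1 : ∀ x, ∑ y, W x y = 1)
    (hsym : GallagerSymmetric W)
    (hsing : ∀ x y z, 0 < W x y * W z y → W x y = W z y)
    (hcol : ∀ y, ∃ x, 0 < W x y)
    (q : Y → ℝ) (hq : ∀ y, q y = ∑ x, ((Fintype.card X : ℝ))⁻¹ * W x y)
    (α : Y → ℝ)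
    (hα : ∀ y, α y = ∑ _x ∈ Finset.univ.filter (fun x => 0 < W x y),
      ((Fintype.card X : ℝ))⁻¹)
    (x₀ : X) :
    (∑ y, q y * (-Real.log (α y)) = capacity W) ∧
    (∑ y, q y * (Real.log (α y)) ^ 2 - (∑ y, q y * Real.log (α y)) ^ 2
      = ∑ y, W x₀ y * (Real.log (W x₀ y / q y)) ^ 2
        - (∑ y, W x₀ y * Real.log (W x₀ y / q y)) ^ 2) ∧
    (∑ y, q y * |(-Real.log (α y)) - capacity W| ^ 3
      = ∑ y, W x₀ y * |Real.log (W x₀ y / q y) - capacity W| ^ 3) :=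
  stmt10_general W hW0 hW1 hsym hsing hcol q hq α hα x₀
end

section
/- Fix a channel W with C(W) > 0, ε ∈ (0,1), δ > 0, and let γ(δ) := C(W) − max{I(Q;W) : Q ∈ closure of S₃(δ)} > 0, where S₃(δ) = {P : min_{P* : I(P*;W)=C(W)} ‖P − P*‖₂ > δ}. Let V_max := max_P V(P,W). Then there exists n₀ ∈ ℤ⁺ (depending on W, ε, δ) such that for all n ≥ n₀, every constant composition code of length n, rate Rₙ = C(W) + √(V_ε(W)/n)·Φ⁻¹(ε), and common composition Qₙ ∈ S₃(δ) has average error probability strictly greater than ε. Quantitatively, it suffices that 1 − e^{−n[γ(δ)/2 + √(V_ε(W)/n)Φ⁻¹(ε)]} − 4V_max/(n γ(δ)²) > ε. -/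
/-!
Fix a codeword `x` of type `Qₙ` and write `p = Wⁿ(· | x)` and `qⁿ` for the product output law.
Under `p` the information density `i(x; y) = ∑ᵢ log (W(yᵢ|xᵢ) / q(yᵢ))` is a sum of independent
terms with mean `n I(Qₙ;W)` and variance `n V(Qₙ;W)`, so by Chebyshev `p {i > n I + t} ≤ n V / t²`.
Where `i ≤ n I + t` we have `p ≤ e^{n I + t} qⁿ`, and the decoding regions are disjoint, so the
average probability of correct decoding is at most `n V / t² + e^{n I + t} / M`. Take `t = n γ / 2`:
for `Qₙ ∈ S₃(δ)` we have `I(Qₙ;W) ≤ C(W) − γ`, so the rate condition turns the second term into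
`e^{−(n γ / 2 + √(n V_ε) Φ⁻¹)}`, and both terms tend to `0` as `n → ∞`.
-/

open Finset

/-- The probability simplex on a finite alphabet. -/
def probSimplex (X : Type*) [Fintype X] : Set (X → ℝ) :=
  {P | (∀ x, 0 ≤ P x) ∧ ∑ x, P x = 1}

/-- The conditional information variance `V(Q,W)`. -/
noncomputable def condInfoVar {X Y : Type*} [Fintype X] [Fintype Y]
    (Q : X → ℝ) (W : X → Y → ℝ) : ℝ :=
  ∑ x, ∑ y, Q x * W x y *
    (Real.log (W x y / ∑ z, Q z * W z y)
      - ∑ b, W x b * Real.log (W x b / ∑ z, Q z * W z b)) ^ 2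

/-- The set of capacity-achieving input distributions. -/
noncomputable def capAchievers {X Y : Type*} [Fintype X] [Fintype Y]
    (W : X → Y → ℝ) : Set (X → ℝ) :=
  {P | P ∈ probSimplex X ∧ mutualInfo P W = capacity W}

/-- The `ε`-dispersion `V_ε(W)`. -/
noncomputable def epsDispersion {X Y : Type*} [Fintype X] [Fintype Y]
    (ε : ℝ) (W : X → Y → ℝ) : ℝ :=
  if ε < 1 / 2 then sInf {v : ℝ | ∃ P ∈ capAchievers W, v = condInfoVar P W}
  else sSup {v : ℝ | ∃ P ∈ capAchievers W, v = condInfoVar P W}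

/-- The `ℓ₂` distance between two input distributions. -/
noncomputable def l2dist {X : Type*} [Fintype X] (P Q : X → ℝ) : ℝ :=
  Real.sqrt (∑ x, (P x - Q x) ^ 2)

/-- The set `S₃(δ)` of distributions `ℓ₂`-far from every capacity achiever. -/
noncomputable def farSet {X Y : Type*} [Fintype X] [Fintype Y]
    (W : X → Y → ℝ) (δ : ℝ) : Set (X → ℝ) :=
  {P | P ∈ probSimplex X ∧
    δ < sInf {d : ℝ | ∃ P' ∈ capAchievers W, d = l2dist P P'}}

/-- Average error probability of a code with codewords `cw` and decoding regions `A`. -/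
noncomputable def avgErr {X Y : Type*} [Fintype X] [Fintype Y] [DecidableEq Y]
    (W : X → Y → ℝ) (n M : ℕ)
    (cw : Fin M → Fin n → X) (A : Fin M → Finset (Fin n → Y)) : ℝ :=
  (M : ℝ)⁻¹ * ∑ m, ∑ yn ∈ (A m)ᶜ, ∏ i, W (cw m i) (yn i)

/-- The decoding regions are disjoint and cover the output space. -/
def isDecoder {Y : Type*} [Fintype Y] [DecidableEq Y]
    (n M : ℕ) (A : Fin M → Finset (Fin n → Y)) : Prop :=
  (∀ m m', m ≠ m' → Disjoint (A m) (A m')) ∧ ∀ yn : Fin n → Y, ∃ m, yn ∈ A m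

/-- All codewords have empirical composition (type) `Q`. -/
def hasComposition {X : Type*} [Fintype X] [DecidableEq X]
    (n M : ℕ) (cw : Fin M → Fin n → X) (Q : X → ℝ) : Prop :=
  ∀ (m : Fin M) (a : X),
    ((Finset.univ.filter (fun i => cw m i = a)).card : ℝ) = n * Q a

/-- Standard normal density. -/
noncomputable def normalPDF (t : ℝ) : ℝ :=
  Real.exp (-t ^ 2 / 2) / Real.sqrt (2 * Real.pi)

/-- Standard normal distribution function. -/
noncomputable def normalCDF (t : ℝ) : ℝ := ∫ s in Set.Iic t, normalPDF s

section ProductDistribution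

variable {ι Y : Type*} [Fintype ι] [DecidableEq ι] [Fintype Y] {w : ι → Y → ℝ}

theorem sum_prod_mul_prod (w g : ι → Y → ℝ) :
    ∑ y : ι → Y, (∏ i, w i (y i)) * ∏ i, g i (y i) = ∏ i, ∑ b, w i b * g i b := by
  simp_rw [← prod_mul_distrib]
  exact (Fintype.prod_sum fun i b => w i b * g i b).symm

theorem sum_prod_eq_one (hw : ∀ i, ∑ b, w i b = 1) : ∑ y : ι → Y, ∏ i, w i (y i) = 1 := by
  rw [← Fintype.prod_sum]
  simp [hw]

theorem sum_prod_mul_apply (hw : ∀ i, ∑ b, w i b = 1) (i : ι) (h : Y → ℝ) :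
    ∑ y : ι → Y, (∏ l, w l (y l)) * h (y i) = ∑ b, w i b * h b := by
  have key := sum_prod_mul_prod w (fun l b => if l = i then h b else 1)
  rw [prod_eq_single i (fun l _ hl => by simp [hl, hw]) (by simp)] at key
  simpa using key

theorem sum_prod_mul_apply_mul_apply (hw : ∀ i, ∑ b, w i b = 1) {i j : ι} (hij : i ≠ j)
    (h k : Y → ℝ) :
    ∑ y : ι → Y, (∏ l, w l (y l)) * (h (y i) * k (y j))
      = (∑ b, w i b * h b) * ∑ b, w j b * k b := by
  let g : ι → Y → ℝ := fun l b => if l = i then h b else if l = j then k b else 1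
  calc ∑ y : ι → Y, (∏ l, w l (y l)) * (h (y i) * k (y j))
      = ∑ y : ι → Y, (∏ l, w l (y l)) * ∏ l, g l (y l) := by
        refine sum_congr rfl fun y _ => congrArg _ ?_
        rw [prod_eq_mul i j hij (fun l _ hl => by simp [g, hl.1, hl.2]) (by simp) (by simp)]
        simp [g, hij.symm]
    _ = ∏ l, ∑ b, w l b * g l b := sum_prod_mul_prod w g
    _ = (∑ b, w i b * h b) * ∑ b, w j b * k b := by
        rw [prod_eq_mul i j hij (fun l _ hl => by simp [g, hl.1, hl.2, hw]) (by simp) (by simp)]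
        simp [g, hij.symm]

theorem sum_prod_mul_sum_sq (hw : ∀ i, ∑ b, w i b = 1) (h : ι → Y → ℝ)
    (hmean : ∀ i, ∑ b, w i b * h i b = 0) :
    ∑ y : ι → Y, (∏ i, w i (y i)) * (∑ i, h i (y i)) ^ 2 = ∑ i, ∑ b, w i b * h i b ^ 2 := by
  simp_rw [sq, sum_mul_sum, mul_sum]
  rw [sum_comm]
  refine sum_congr rfl fun i _ => ?_
  rw [sum_comm, sum_eq_single i]
  · simpa only [mul_assoc] using sum_prod_mul_apply hw i fun b => h i b * h i b
  · intro j _ hji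
    rw [sum_prod_mul_apply_mul_apply hw hji.symm, hmean j, mul_zero]
  · simp

end ProductDistribution

theorem mul_log_sq_le_four {s : ℝ} (hs0 : 0 ≤ s) (hs1 : s ≤ 1) : s * Real.log s ^ 2 ≤ 4 := by
  rcases hs0.eq_or_lt with rfl | hs0
  · simp
  have hr0 : 0 < √s := Real.sqrt_pos.2 hs0
  have hbound := Real.abs_log_mul_self_lt (√s) hr0 (Real.sqrt_le_one.2 hs1)
  have hsq : (Real.log √s * √s) ^ 2 ≤ 1 := by
    rw [← sq_abs]
    exact pow_le_one₀ (abs_nonneg _) hbound.le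
  have key : s * Real.log s ^ 2 = 4 * (Real.log √s * √s) ^ 2 := by
    rw [Real.log_sqrt hs0.le, mul_pow, Real.sq_sqrt hs0.le]
    ring
  linarith

section Channel

variable {X Y : Type*} [Fintype X] {W : X → Y → ℝ} {Q : X → ℝ}

noncomputable def outputDist (W : X → Y → ℝ) (Q : X → ℝ) (b : Y) : ℝ := ∑ z, Q z * W z b

noncomputable def infoDensity (W : X → Y → ℝ) (Q : X → ℝ) (a : X) (b : Y) : ℝ :=
  Real.log (W a b / outputDist W Q b)

theorem mul_le_outputDist (hW0 : ∀ x y, 0 ≤ W x y) (hQ : Q ∈ probSimplex X) (a : X) (b : Y) :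
    Q a * W a b ≤ outputDist W Q b :=
  single_le_sum (fun z _ => mul_nonneg (hQ.1 z) (hW0 z b)) (mem_univ a)

theorem outputDist_nonneg (hW0 : ∀ x y, 0 ≤ W x y) (hQ : Q ∈ probSimplex X) (b : Y) :
    0 ≤ outputDist W Q b :=
  sum_nonneg fun z _ => mul_nonneg (hQ.1 z) (hW0 z b)

variable [Fintype Y]

noncomputable def infoDensityMean (W : X → Y → ℝ) (Q : X → ℝ) (a : X) : ℝ :=
  ∑ b, W a b * infoDensity W Q a b

noncomputable def infoDensityVar (W : X → Y → ℝ) (Q : X → ℝ) (a : X) : ℝ :=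
  ∑ b, W a b * (infoDensity W Q a b - infoDensityMean W Q a) ^ 2

theorem mutualInfo_eq_sum : mutualInfo Q W = ∑ a, Q a * infoDensityMean W Q a := by
  simp only [mutualInfo, infoDensityMean, infoDensity, outputDist, mul_sum, mul_assoc]

theorem condInfoVar_eq_sum : condInfoVar Q W = ∑ a, Q a * infoDensityVar W Q a := by
  simp only [condInfoVar, infoDensityVar, infoDensityMean, infoDensity, outputDist, mul_sum,
    mul_assoc]

theorem sum_outputDist (hW1 : ∀ x, ∑ y, W x y = 1) (hQ : Q ∈ probSimplex X) :
    ∑ b, outputDist W Q b = 1 := by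
  simp only [outputDist]
  rw [sum_comm]
  simp_rw [← mul_sum, hW1, mul_one]
  exact hQ.2

theorem outputDist_le_one (hW0 : ∀ x y, 0 ≤ W x y) (hW1 : ∀ x, ∑ y, W x y = 1)
    (hQ : Q ∈ probSimplex X) (b : Y) : outputDist W Q b ≤ 1 :=
  (mem_Icc_of_mem_stdSimplex ⟨outputDist_nonneg hW0 hQ, sum_outputDist hW1 hQ⟩ b).2

theorem sum_mul_infoDensity_sub_mean (hW1 : ∀ x, ∑ y, W x y = 1) (a : X) :
    ∑ b, W a b * (infoDensity W Q a b - infoDensityMean W Q a) = 0 := by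
  simp_rw [mul_sub]
  rw [sum_sub_distrib, ← sum_mul, hW1, one_mul, infoDensityMean, sub_self]

theorem infoDensityVar_le (hW1 : ∀ x, ∑ y, W x y = 1) (a : X) :
    infoDensityVar W Q a ≤ ∑ b, W a b * infoDensity W Q a b ^ 2 := by
  set d := infoDensityMean W Q a
  have hexpand : infoDensityVar W Q a = ∑ b, W a b * infoDensity W Q a b ^ 2
      - 2 * d * ∑ b, W a b * infoDensity W Q a b + d ^ 2 * ∑ b, W a b := by
    simp only [infoDensityVar, mul_sum, ← sum_sub_distrib, ← sum_add_distrib]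
    exact sum_congr rfl fun b _ => by ring
  rw [hexpand, hW1, ← infoDensityMean]
  nlinarith [sq_nonneg d]

theorem mul_mul_infoDensity_sq_le (hW0 : ∀ x y, 0 ≤ W x y) (hW1 : ∀ x, ∑ y, W x y = 1)
    (hQ : Q ∈ probSimplex X) (a : X) (b : Y) :
    Q a * W a b * infoDensity W Q a b ^ 2 ≤ 16 := by
  have hQa1 : Q a ≤ 1 := (mem_Icc_of_mem_stdSimplex hQ a).2
  have hWab1 : W a b ≤ 1 := (mem_Icc_of_mem_stdSimplex ⟨hW0 a, hW1 a⟩ b).2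
  have hQW0 : 0 ≤ Q a * W a b := mul_nonneg (hQ.1 a) (hW0 a b)
  rcases hQW0.eq_or_lt with h | hQW
  · simp [← h]
  set q := outputDist W Q b
  have hWq : Q a * W a b ≤ q := mul_le_outputDist hW0 hQ a b
  have hWab : 0 < W a b := pos_of_mul_pos_right hQW (hQ.1 a)
  have hq : 0 < q := hQW.trans_le hWq
  have hW : Q a * W a b * Real.log (W a b) ^ 2 ≤ 4 :=
    calc Q a * W a b * Real.log (W a b) ^ 2 ≤ W a b * Real.log (W a b) ^ 2 := by
          gcongr
          exact mul_le_of_le_one_left (hW0 a b) hQa1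
      _ ≤ 4 := mul_log_sq_le_four (hW0 a b) hWab1
  have hq4 : Q a * W a b * Real.log q ^ 2 ≤ 4 :=
    calc Q a * W a b * Real.log q ^ 2 ≤ q * Real.log q ^ 2 := by gcongr
      _ ≤ 4 := mul_log_sq_le_four hq.le (outputDist_le_one hW0 hW1 hQ b)
  rw [infoDensity, Real.log_div hWab.ne' hq.ne']
  nlinarith [sq_nonneg (Real.log (W a b) + Real.log q)]

theorem mutualInfo_le (hW0 : ∀ x y, 0 ≤ W x y) (hW1 : ∀ x, ∑ y, W x y = 1)
    (hQ : Q ∈ probSimplex X) : mutualInfo Q W ≤ 17 * Fintype.card X * Fintype.card Y := by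
  calc mutualInfo Q W = ∑ a, ∑ b, Q a * W a b * infoDensity W Q a b := by
        simp only [mutualInfo_eq_sum, infoDensityMean, mul_sum, mul_assoc]
    _ ≤ ∑ _a : X, ∑ _b : Y, (17 : ℝ) := by
        gcongr with a _ b
        have h16 := mul_mul_infoDensity_sq_le hW0 hW1 hQ a b
        have hQW1 : Q a * W a b ≤ 1 := mul_le_one₀ (mem_Icc_of_mem_stdSimplex hQ a).2 (hW0 a b)
          (mem_Icc_of_mem_stdSimplex ⟨hW0 a, hW1 a⟩ b).2
        nlinarith [mul_nonneg (mul_nonneg (hQ.1 a) (hW0 a b)) (sq_nonneg (infoDensity W Q a b - 1))]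
    _ = 17 * Fintype.card X * Fintype.card Y := by simp; ring

theorem condInfoVar_le (hW0 : ∀ x y, 0 ≤ W x y) (hW1 : ∀ x, ∑ y, W x y = 1)
    (hQ : Q ∈ probSimplex X) : condInfoVar Q W ≤ 16 * Fintype.card X * Fintype.card Y :=
  calc condInfoVar Q W ≤ ∑ a, ∑ b, Q a * W a b * infoDensity W Q a b ^ 2 := by
        rw [condInfoVar_eq_sum]
        gcongr with a
        simp only [mul_assoc, ← mul_sum]
        exact mul_le_mul_of_nonneg_left (infoDensityVar_le hW1 a) (hQ.1 a)
    _ ≤ ∑ _a : X, ∑ _b : Y, (16 : ℝ) := by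
        gcongr with a _ b
        exact mul_mul_infoDensity_sq_le hW0 hW1 hQ a b
    _ = 16 * Fintype.card X * Fintype.card Y := by simp; ring

end Channel

section ConstantComposition

variable {X Y : Type*} [DecidableEq X] {W : X → Y → ℝ} {Q : X → ℝ} {n : ℕ} {x : Fin n → X}

theorem pos_of_type (hx : ∀ a, (#{i | x i = a} : ℝ) = n * Q a) (i : Fin n) : 0 < Q (x i) := by
  have hcard : (0 : ℝ) < #{j | x j = x i} := by
    exact_mod_cast card_pos.2 ⟨i, by simp⟩
  rw [hx] at hcard
  exact pos_of_mul_pos_right hcard n.cast_nonneg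

variable [Fintype X]

noncomputable def wordInfoDensity (W : X → Y → ℝ) (Q : X → ℝ) (x : Fin n → X) (y : Fin n → Y) :
    ℝ :=
  ∑ i, infoDensity W Q (x i) (y i)

theorem sum_comp_eq_of_type (hx : ∀ a, (#{i | x i = a} : ℝ) = n * Q a) (F : X → ℝ) :
    ∑ i, F (x i) = n * ∑ a, Q a * F a := by
  rw [← sum_fiberwise' univ x F, mul_sum]
  refine sum_congr rfl fun a _ => ?_
  rw [sum_const, nsmul_eq_mul, hx a, mul_assoc]

theorem prod_le_exp_mul_prod_outputDist (hW0 : ∀ x y, 0 ≤ W x y) (hQ : Q ∈ probSimplex X)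
    (hx : ∀ a, (#{i | x i = a} : ℝ) = n * Q a) {θ : ℝ} {y : Fin n → Y}
    (hy : wordInfoDensity W Q x y ≤ θ) :
    ∏ i, W (x i) (y i) ≤ Real.exp θ * ∏ i, outputDist W Q (y i) := by
  by_cases hzero : ∃ i, W (x i) (y i) = 0
  · obtain ⟨i, hi⟩ := hzero
    rw [prod_eq_zero (mem_univ i) hi]
    exact mul_nonneg (Real.exp_nonneg θ) (prod_nonneg fun i _ => outputDist_nonneg hW0 hQ _)
  simp only [not_exists] at hzero
  have hW : ∀ i, 0 < W (x i) (y i) := fun i => (hW0 _ _).lt_of_ne (Ne.symm (hzero i))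
  have hq : ∀ i, 0 < outputDist W Q (y i) := fun i =>
    (mul_pos (pos_of_type hx i) (hW i)).trans_le (mul_le_outputDist hW0 hQ _ _)
  have hprod : ∏ i, W (x i) (y i)
      = Real.exp (wordInfoDensity W Q x y) * ∏ i, outputDist W Q (y i) := by
    rw [wordInfoDensity, Real.exp_sum, ← prod_mul_distrib]
    refine prod_congr rfl fun i _ => ?_
    rw [infoDensity, Real.exp_log (div_pos (hW i) (hq i)), div_mul_cancel₀ _ (hq i).ne']
  rw [hprod]
  gcongr
  exact prod_nonneg fun i _ => (hq i).le

variable [Fintype Y]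

theorem sum_prod_mul_wordInfoDensity_sub_sq (hW1 : ∀ x, ∑ y, W x y = 1)
    (hx : ∀ a, (#{i | x i = a} : ℝ) = n * Q a) :
    ∑ y : Fin n → Y, (∏ i, W (x i) (y i)) * (wordInfoDensity W Q x y - n * mutualInfo Q W) ^ 2
      = n * condInfoVar Q W := by
  have hcentre : ∀ y, wordInfoDensity W Q x y - n * mutualInfo Q W
      = ∑ i, (infoDensity W Q (x i) (y i) - infoDensityMean W Q (x i)) := by
    intro y
    rw [sum_sub_distrib, mutualInfo_eq_sum, ← sum_comp_eq_of_type hx, wordInfoDensity]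
  simp_rw [hcentre]
  rw [sum_prod_mul_sum_sq (fun i => hW1 (x i)) _ fun i => sum_mul_infoDensity_sub_mean hW1 _,
    condInfoVar_eq_sum, ← sum_comp_eq_of_type hx (infoDensityVar W Q)]
  rfl

theorem sum_prod_filter_lt_wordInfoDensity_le (hW0 : ∀ x y, 0 ≤ W x y)
    (hW1 : ∀ x, ∑ y, W x y = 1) (hx : ∀ a, (#{i | x i = a} : ℝ) = n * Q a) {t : ℝ}
    (ht : 0 < t) :
    ∑ y with n * mutualInfo Q W + t < wordInfoDensity W Q x y, ∏ i, W (x i) (y i)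
      ≤ n * condInfoVar Q W / t ^ 2 := by
  rw [le_div_iff₀ (by positivity), ← sum_prod_mul_wordInfoDensity_sub_sq hW1 hx, sum_mul]
  calc ∑ y with n * mutualInfo Q W + t < wordInfoDensity W Q x y, (∏ i, W (x i) (y i)) * t ^ 2
      ≤ ∑ y with n * mutualInfo Q W + t < wordInfoDensity W Q x y,
          (∏ i, W (x i) (y i)) * (wordInfoDensity W Q x y - n * mutualInfo Q W) ^ 2 := by
        gcongr with y hy
        · exact prod_nonneg fun i _ => hW0 _ _
        · rw [mem_filter] at hy; linarith
    _ ≤ _ := sum_le_sum_of_subset_of_nonneg (filter_subset _ _) fun y _ _ =>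
        mul_nonneg (prod_nonneg fun i _ => hW0 _ _) (sq_nonneg _)

theorem sum_prod_le_of_type (hW0 : ∀ x y, 0 ≤ W x y) (hW1 : ∀ x, ∑ y, W x y = 1)
    (hQ : Q ∈ probSimplex X) (hx : ∀ a, (#{i | x i = a} : ℝ) = n * Q a) {t : ℝ} (ht : 0 < t)
    (B : Finset (Fin n → Y)) :
    ∑ y ∈ B, ∏ i, W (x i) (y i) ≤ n * condInfoVar Q W / t ^ 2
      + Real.exp (n * mutualInfo Q W + t) * ∑ y ∈ B, ∏ i, outputDist W Q (y i) := by
  set θ := n * mutualInfo Q W + t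
  rw [← sum_filter_add_sum_filter_not B fun y => θ < wordInfoDensity W Q x y]
  gcongr ?_ + ?_
  · exact (sum_le_sum_of_subset_of_nonneg (filter_subset_filter _ (subset_univ B))
      fun y _ _ => prod_nonneg fun i _ => hW0 _ _).trans
      (sum_prod_filter_lt_wordInfoDensity_le hW0 hW1 hx ht)
  · rw [mul_sum]
    calc ∑ y ∈ B with ¬θ < wordInfoDensity W Q x y, ∏ i, W (x i) (y i)
        ≤ ∑ y ∈ B with ¬θ < wordInfoDensity W Q x y,
            Real.exp θ * ∏ i, outputDist W Q (y i) :=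
          sum_le_sum fun y hy => prod_le_exp_mul_prod_outputDist hW0 hQ hx
            (not_lt.1 (mem_filter.1 hy).2)
      _ ≤ ∑ y ∈ B, Real.exp θ * ∏ i, outputDist W Q (y i) :=
          sum_le_sum_of_subset_of_nonneg (filter_subset _ _) fun y _ _ =>
            mul_nonneg (Real.exp_nonneg θ) (prod_nonneg fun i _ => outputDist_nonneg hW0 hQ _)

end ConstantComposition

theorem exp_div_le_exp_neg {n : ℕ} {I C γ D Φ M : ℝ} (hI : I ≤ C - γ)
    (hM : Real.exp (n * (C + √(D / n) * Φ)) ≤ M) :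
    Real.exp (n * I + n * (γ / 2)) / M ≤ Real.exp (-(n * (γ / 2) + √(n * D) * Φ)) := by
  have hrate : (n : ℝ) * √(D / n) = √(n * D) := by
    rw [Real.sqrt_div' _ n.cast_nonneg, Real.sqrt_mul n.cast_nonneg, ← mul_div_assoc,
      mul_div_right_comm, Real.div_sqrt]
  rw [div_le_iff₀ ((Real.exp_pos _).trans_le hM)]
  refine le_trans ?_ (mul_le_mul_of_nonneg_left hM (Real.exp_nonneg _))
  rw [← Real.exp_add, Real.exp_le_exp, mul_add, ← mul_assoc, hrate]
  nlinarith [mul_le_mul_of_nonneg_left hI n.cast_nonneg]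

section Code

variable {X Y : Type*} [Fintype X] [Fintype Y] [DecidableEq Y] {W : X → Y → ℝ} {n M : ℕ}
  {cw : Fin M → Fin n → X} {A : Fin M → Finset (Fin n → Y)}

theorem avgErr_eq_one_sub (hW1 : ∀ x, ∑ y, W x y = 1) (hM : 0 < M) :
    avgErr W n M cw A = 1 - (M : ℝ)⁻¹ * ∑ m, ∑ y ∈ A m, ∏ i, W (cw m i) (y i) := by
  have hcompl : ∀ m, ∑ y ∈ (A m)ᶜ, ∏ i, W (cw m i) (y i)
      = 1 - ∑ y ∈ A m, ∏ i, W (cw m i) (y i) := fun m => by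
    rw [← sum_prod_eq_one (w := fun i => W (cw m i)) fun i => hW1 _,
      ← sum_compl_add_sum (A m), add_sub_cancel_right]
  simp only [avgErr, hcompl, sum_sub_distrib, sum_const, card_univ, Fintype.card_fin,
    nsmul_eq_mul, mul_one, mul_sub]
  rw [inv_mul_cancel₀ (by positivity)]

theorem sum_sum_prod_outputDist_le_one {Q : X → ℝ} (hW0 : ∀ x y, 0 ≤ W x y)
    (hW1 : ∀ x, ∑ y, W x y = 1) (hQ : Q ∈ probSimplex X)
    (hdisj : ∀ m m', m ≠ m' → Disjoint (A m) (A m')) :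
    ∑ m, ∑ y ∈ A m, ∏ i, outputDist W Q (y i) ≤ 1 := by
  rw [← sum_biUnion fun m _ m' _ hne => hdisj m m' hne,
    ← sum_prod_eq_one (w := fun (_ : Fin n) => outputDist W Q) fun _ => sum_outputDist hW1 hQ]
  exact sum_le_sum_of_subset_of_nonneg (subset_univ _) fun y _ _ =>
    prod_nonneg fun i _ => outputDist_nonneg hW0 hQ _

theorem one_sub_le_avgErr [DecidableEq X] {Q : X → ℝ} (hW0 : ∀ x y, 0 ≤ W x y)
    (hW1 : ∀ x, ∑ y, W x y = 1) (hM : 0 < M) (hdec : isDecoder n M A)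
    (hcomp : hasComposition n M cw Q) (hQ : Q ∈ probSimplex X) {t : ℝ} (ht : 0 < t) :
    1 - n * condInfoVar Q W / t ^ 2 - Real.exp (n * mutualInfo Q W + t) / M
      ≤ avgErr W n M cw A := by
  have hMpos : (0 : ℝ) < M := by positivity
  have hsum := sum_le_sum fun m (_ : m ∈ univ) =>
    sum_prod_le_of_type hW0 hW1 hQ (hcomp m) ht (A m)
  rw [sum_add_distrib, sum_const, card_univ, Fintype.card_fin, nsmul_eq_mul, ← mul_sum] at hsum
  have hcorrect : (M : ℝ)⁻¹ * ∑ m, ∑ y ∈ A m, ∏ i, W (cw m i) (y i)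
      ≤ n * condInfoVar Q W / t ^ 2 + Real.exp (n * mutualInfo Q W + t) / M := by
    rw [inv_mul_le_iff₀ hMpos, mul_add, mul_div_cancel₀ _ hMpos.ne']
    exact hsum.trans (add_le_add_right (mul_le_of_le_one_right (Real.exp_nonneg _)
      (sum_sum_prod_outputDist_le_one hW0 hW1 hQ hdec.1)) _)
  rw [avgErr_eq_one_sub hW1 hM]
  linarith

theorem lt_avgErr_of_rate_le [DecidableEq X] {Q : X → ℝ} {ε γ C D Φ V : ℝ}
    (hW0 : ∀ x y, 0 ≤ W x y) (hW1 : ∀ x, ∑ y, W x y = 1) (hγ : 0 < γ)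
    (hI : mutualInfo Q W ≤ C - γ) (hV : condInfoVar Q W ≤ V) (hn : 0 < n)
    (hε : ε < 1 - Real.exp (-(n * (γ / 2) + √(n * D) * Φ)) - 4 * V / (n * γ ^ 2))
    (hM : 0 < M) (hdec : isDecoder n M A) (hcomp : hasComposition n M cw Q)
    (hQ : Q ∈ probSimplex X) (hrate : Real.exp (n * (C + √(D / n) * Φ)) ≤ M) :
    ε < avgErr W n M cw A := by
  have hconverse := one_sub_le_avgErr hW0 hW1 hM hdec hcomp hQ (t := n * (γ / 2))
    (by positivity)
  have hvar : n * condInfoVar Q W / (n * (γ / 2)) ^ 2 ≤ 4 * V / (n * γ ^ 2) := by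
    rw [show (n * (γ / 2)) ^ 2 = n * (n * γ ^ 2 / 4) by ring,
      mul_div_mul_left _ _ (by positivity), div_div_eq_mul_div, mul_comm]
    gcongr
  linarith [exp_div_le_exp_neg hI hrate]

end Code

open Filter Topology

theorem eventually_lt_one_sub_exp_sub {ε γ : ℝ} (hε : ε < 1) (hγ : 0 < γ) (D Φ V : ℝ) :
    ∀ᶠ n : ℕ in atTop,
      ε < 1 - Real.exp (-(n * (γ / 2) + √(n * D) * Φ)) - 4 * V / (n * γ ^ 2) := by
  have hsqrt : Tendsto (fun n : ℕ => √(n : ℝ)) atTop atTop :=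
    Real.tendsto_sqrt_atTop.comp tendsto_natCast_atTop_atTop
  have hexponent : Tendsto (fun n : ℕ => n * (γ / 2) + √(n * D) * Φ) atTop atTop := by
    refine (hsqrt.atTop_mul_atTop₀ (tendsto_atTop_add_const_right _ (√D * Φ)
      (hsqrt.atTop_mul_const (half_pos hγ)))).congr fun n => ?_
    rw [Real.sqrt_mul n.cast_nonneg]
    nth_rw 3 [← Real.mul_self_sqrt n.cast_nonneg]
    ring
  have hexp := Real.tendsto_exp_neg_atTop_nhds_zero.comp hexponent
  have hvar : Tendsto (fun n : ℕ => 4 * V / (n * γ ^ 2)) atTop (𝓝 0) :=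
    (tendsto_const_div_atTop_nhds_zero_nat (4 * V / γ ^ 2)).congr fun n => by
      rw [div_div, mul_comm (γ ^ 2)]
  have hlim := (tendsto_const_nhds (x := (1 : ℝ))).sub hexp |>.sub hvar
  rw [sub_zero, sub_zero] at hlim
  exact hlim.eventually (lt_mem_nhds hε)

theorem stmt12_general {X Y : Type*} [Fintype X] [Fintype Y] [DecidableEq X] [DecidableEq Y]
    (W : X → Y → ℝ) (hW0 : ∀ x y, 0 ≤ W x y) (hW1 : ∀ x, ∑ y, W x y = 1)
    (ε : ℝ) (hε : ε ∈ Set.Ioo (0 : ℝ) 1) (δ : ℝ)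
    (γ : ℝ)
    (hγdef : γ = capacity W -
      sSup {v : ℝ | ∃ Q ∈ closure (farSet W δ), v = mutualInfo Q W})
    (hγpos : 0 < γ)
    (Vmax : ℝ)
    (hVmax : Vmax = sSup {v : ℝ | ∃ Q ∈ probSimplex X, v = condInfoVar Q W})
    (Φinv : ℝ) :
    (∃ n₀ : ℕ, ∀ n : ℕ, n₀ ≤ n → 0 < n →
      ∀ (M : ℕ), 0 < M →
        ∀ (cw : Fin M → Fin n → X) (A : Fin M → Finset (Fin n → Y)) (Qn : X → ℝ),
          isDecoder n M A → hasComposition n M cw Qn → Qn ∈ farSet W δ →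
          Real.exp (n * (capacity W +
            Real.sqrt (epsDispersion ε W / n) * Φinv)) ≤ (M : ℝ) →
          ε < avgErr W n M cw A) ∧
    (∀ n : ℕ, 0 < n →
      ε < 1 - Real.exp (-(n * (γ / 2) + Real.sqrt (n * epsDispersion ε W) * Φinv))
            - 4 * Vmax / (n * γ ^ 2) →
      ∀ (M : ℕ), 0 < M →
        ∀ (cw : Fin M → Fin n → X) (A : Fin M → Finset (Fin n → Y)) (Qn : X → ℝ),
          isDecoder n M A → hasComposition n M cw Qn → Qn ∈ farSet W δ →
          Real.exp (n * (capacity W +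
            Real.sqrt (epsDispersion ε W / n) * Φinv)) ≤ (M : ℝ) →
          ε < avgErr W n M cw A) := by
  have hclosure : closure (farSet W δ) ⊆ probSimplex X :=
    closure_minimal (fun P hP => hP.1) (isClosed_stdSimplex ℝ X)
  have hI : ∀ Q ∈ farSet W δ, mutualInfo Q W ≤ capacity W - γ := fun Q hQ => by
    have hbdd : BddAbove {v | ∃ Q ∈ closure (farSet W δ), v = mutualInfo Q W} :=
      ⟨17 * Fintype.card X * Fintype.card Y, by
        rintro _ ⟨P, hP, rfl⟩; exact mutualInfo_le hW0 hW1 (hclosure hP)⟩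
    linarith [le_csSup hbdd ⟨Q, subset_closure hQ, rfl⟩]
  have hV : ∀ Q ∈ probSimplex X, condInfoVar Q W ≤ Vmax := fun Q hQ =>
    hVmax ▸ le_csSup ⟨16 * Fintype.card X * Fintype.card Y, by
      rintro _ ⟨P, hP, rfl⟩; exact condInfoVar_le hW0 hW1 hP⟩ ⟨Q, hQ, rfl⟩
  obtain ⟨n₀, hn₀⟩ := eventually_atTop.1 <|
    eventually_lt_one_sub_exp_sub hε.2 hγpos (epsDispersion ε W) Φinv Vmax
  exact ⟨⟨n₀, fun n hn hpos M hM cw A Qn hdec hcomp hfar hrate =>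
      lt_avgErr_of_rate_le hW0 hW1 hγpos (hI Qn hfar) (hV Qn hfar.1) hpos (hn₀ n hn) hM hdec hcomp
        hfar.1 hrate⟩,
    fun n hn hε' M hM cw A Qn hdec hcomp hfar hrate =>
      lt_avgErr_of_rate_le hW0 hW1 hγpos (hI Qn hfar) (hV Qn hfar.1) hn hε' hM hdec hcomp hfar.1
        hrate⟩

theorem stmt12 {X Y : Type*} [Fintype X] [Fintype Y] [DecidableEq X] [DecidableEq Y]
    [Nonempty X] [Nonempty Y]
    (W : X → Y → ℝ) (hW0 : ∀ x y, 0 ≤ W x y) (hW1 : ∀ x, ∑ y, W x y = 1)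
    (hC : 0 < capacity W)
    (ε : ℝ) (hε : ε ∈ Set.Ioo (0 : ℝ) 1) (δ : ℝ) (hδ : 0 < δ)
    (γ : ℝ)
    (hγdef : γ = capacity W -
      sSup {v : ℝ | ∃ Q ∈ closure (farSet W δ), v = mutualInfo Q W})
    (hγpos : 0 < γ)
    (Vmax : ℝ)
    (hVmax : Vmax = sSup {v : ℝ | ∃ Q ∈ probSimplex X, v = condInfoVar Q W})
    (Φinv : ℝ) (hΦ : normalCDF Φinv = ε) :
    (∃ n₀ : ℕ, ∀ n : ℕ, n₀ ≤ n → 0 < n →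
      ∀ (M : ℕ), 0 < M →
        ∀ (cw : Fin M → Fin n → X) (A : Fin M → Finset (Fin n → Y)) (Qn : X → ℝ),
          isDecoder n M A → hasComposition n M cw Qn → Qn ∈ farSet W δ →
          Real.exp (n * (capacity W +
            Real.sqrt (epsDispersion ε W / n) * Φinv)) ≤ (M : ℝ) →
          ε < avgErr W n M cw A) ∧
    (∀ n : ℕ, 0 < n →
      ε < 1 - Real.exp (-(n * (γ / 2) + Real.sqrt (n * epsDispersion ε W) * Φinv))
            - 4 * Vmax / (n * γ ^ 2) →
      ∀ (M : ℕ), 0 < M →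
        ∀ (cw : Fin M → Fin n → X) (A : Fin M → Finset (Fin n → Y)) (Qn : X → ℝ),
          isDecoder n M A → hasComposition n M cw Qn → Qn ∈ farSet W δ →
          Real.exp (n * (capacity W +
            Real.sqrt (epsDispersion ε W / n) * Φinv)) ≤ (M : ℝ) →
          ε < avgErr W n M cw A) :=
  stmt12_general W hW0 hW1 ε hε δ γ hγdef hγpos Vmax hVmax Φinv
end

section
/- Let W be a channel with a capacity-achieving input set P*_W = {P : I(P;W) = C(W)}, and for P ∈ P(X) let P*(P) be a closest element of P*_W in ℓ₂ distance. Suppose β₁, β₂ > 0 satisfy I(P;W) ≤ C(W) − β₁‖P − P*(P)‖₂² and |√V(P,W) − √V(P*(P),W)| ≤ β₂‖P − P*(P)‖₂ for all P in a set S. Then for every P ∈ S with V(P*(P),W) ≤ V_ε(W) (e.g., ε < 1/2 and V_ε the minimum over capacity-achievers) and every n ∈ ℤ⁺ and ε ∈ (0,1/2): n·I(P;W) + √(n·V(P,W))·Φ⁻¹(ε) ≤ n·C(W) + √(n·V_ε(W))·Φ⁻¹(ε) + (β₂|Φ⁻¹(ε)|)²/(4β₁). -/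
open Finset

/-!
Since `ε < 1/2`, `Φ⁻¹(ε) < 0`, and `V_ε(W)` is the least dispersion of a capacity achiever, so the
hypothesis forces `V_ε(W) = V(P*(P), W)`. Writing `t = ‖P - P*(P)‖₂`, the first-order term loses at
least `n β₁ t²` while the Lipschitz bound on `√V` lets the second-order term gain at most
`√n β₂ |Φ⁻¹(ε)| t`; a quadratic `b s - a s²` never exceeds `b² / (4a)`.
-/

open MeasureTheory ProbabilityTheory

lemma normalPDF_eq_gaussianPDFReal : normalPDF = gaussianPDFReal 0 1 := by
  ext t
  simp [normalPDF, gaussianPDFReal, div_eq_inv_mul]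

lemma normalCDF_eq_cdf_gaussianReal (t : ℝ) : normalCDF t = cdf (gaussianReal 0 1) t := by
  rw [cdf_eq_real, measureReal_def, gaussianReal_apply_eq_integral _ one_ne_zero,
    ENNReal.toReal_ofReal (setIntegral_nonneg measurableSet_Iic fun x _ ↦ gaussianPDFReal_nonneg _ _ x),
    normalCDF, normalPDF_eq_gaussianPDFReal]

lemma gaussianReal_Iic_zero : (gaussianReal 0 1).real (Set.Iic 0) = 1 / 2 := by
  have := nullSingletonClass_gaussianReal (μ := 0) one_ne_zero
  have hsymm : (gaussianReal 0 1).real (Set.Iic 0) = (gaussianReal 0 1).real (Set.Ioi 0) := by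
    conv_lhs => rw [← neg_zero, ← gaussianReal_map_neg]
    rw [map_measureReal_apply measurable_neg measurableSet_Iic, measureReal_congr Ioi_ae_eq_Ici]
    simp
  have hsplit : (gaussianReal 0 1).real (Set.Iic 0) + (gaussianReal 0 1).real (Set.Ioi 0) = 1 := by
    rw [← Set.compl_Iic, measureReal_add_measureReal_compl measurableSet_Iic, probReal_univ]
  linarith

lemma normalCDF_zero : normalCDF 0 = 1 / 2 := by
  rw [normalCDF_eq_cdf_gaussianReal, cdf_eq_real, gaussianReal_Iic_zero]

lemma normalCDF_monotone : Monotone normalCDF := by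
  intro a b hab
  simpa only [normalCDF_eq_cdf_gaussianReal] using (cdf (gaussianReal 0 1)).mono hab

lemma neg_of_normalCDF_lt_half {t : ℝ} (ht : normalCDF t < 1 / 2) : t < 0 := by
  by_contra! h
  exact (normalCDF_zero ▸ normalCDF_monotone h).not_gt ht

lemma condInfoVar_nonneg {X Y : Type*} [Fintype X] [Fintype Y] {Q : X → ℝ} {W : X → Y → ℝ}
    (hW : ∀ x y, 0 ≤ W x y) (hQ : ∀ x, 0 ≤ Q x) : 0 ≤ condInfoVar Q W :=
  Finset.sum_nonneg fun x _ ↦ Finset.sum_nonneg fun y _ ↦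
    mul_nonneg (mul_nonneg (hQ x) (hW x y)) (sq_nonneg _)

lemma epsDispersion_le_condInfoVar {X Y : Type*} [Fintype X] [Fintype Y] {ε : ℝ}
    {W : X → Y → ℝ} {P : X → ℝ} (hε : ε < 1 / 2) (hW : ∀ x y, 0 ≤ W x y)
    (hP : P ∈ capAchievers W) : epsDispersion ε W ≤ condInfoVar P W := by
  rw [epsDispersion, if_pos hε]
  refine csInf_le ⟨0, ?_⟩ ⟨P, hP, rfl⟩
  rintro v ⟨Q, hQ, rfl⟩
  exact condInfoVar_nonneg hW hQ.1.1

lemma mul_sub_mul_sq_le_sq_div {a : ℝ} (ha : 0 < a) (b t : ℝ) :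
    b * t - a * t ^ 2 ≤ b ^ 2 / (4 * a) := by
  rw [le_div_iff₀ (by positivity)]
  nlinarith [sq_nonneg (b - 2 * a * t)]

lemma mul_add_sqrt_mul_le_of_gap {n I C V V' β₁ β₂ t Φ : ℝ} (hn : 0 ≤ n) (hβ₁ : 0 < β₁)
    (hΦ : Φ ≤ 0) (hI : I ≤ C - β₁ * t ^ 2) (hV : |√V - √V'| ≤ β₂ * t) :
    n * I + √(n * V) * Φ ≤ n * C + √(n * V') * Φ + (β₂ * |Φ|) ^ 2 / (4 * β₁) := by
  rw [Real.sqrt_mul hn, Real.sqrt_mul hn, abs_of_nonpos hΦ]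
  have hsq : √n ^ 2 = n := Real.sq_sqrt hn
  have hVlow : √n * √V * Φ ≤ √n * (√V' - β₂ * t) * Φ :=
    mul_le_mul_of_nonpos_right
      (mul_le_mul_of_nonneg_left (by linarith [(abs_le.mp hV).1]) (Real.sqrt_nonneg n)) hΦ
  have hIn : n * I ≤ n * (C - β₁ * t ^ 2) := mul_le_mul_of_nonneg_left hI hn
  have hquad := mul_sub_mul_sq_le_sq_div hβ₁ (β₂ * -Φ) (√n * t)
  rw [mul_pow, hsq] at hquad
  linarith

theorem stmt14_general {X Y : Type*} [Fintype X] [Fintype Y]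
    (W : X → Y → ℝ) (hW0 : ∀ x y, 0 ≤ W x y)
    (Pstar : (X → ℝ) → (X → ℝ))
    (hPstar : ∀ P, Pstar P ∈ capAchievers W)
    (S : Set (X → ℝ))
    (β₁ β₂ : ℝ) (hβ₁ : 0 < β₁)
    (hI : ∀ P ∈ S, mutualInfo P W ≤ capacity W - β₁ * l2dist P (Pstar P) ^ 2)
    (hVlip : ∀ P ∈ S, |Real.sqrt (condInfoVar P W)
      - Real.sqrt (condInfoVar (Pstar P) W)| ≤ β₂ * l2dist P (Pstar P))
    (ε : ℝ) (hε : ε ∈ Set.Ioo (0 : ℝ) (1 / 2))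
    (Φinv : ℝ) (hΦ : normalCDF Φinv = ε) :
    ∀ P ∈ S, condInfoVar (Pstar P) W ≤ epsDispersion ε W →
      ∀ n : ℕ, 1 ≤ n →
        (n : ℝ) * mutualInfo P W + Real.sqrt (n * condInfoVar P W) * Φinv
          ≤ (n : ℝ) * capacity W + Real.sqrt (n * epsDispersion ε W) * Φinv
            + (β₂ * |Φinv|) ^ 2 / (4 * β₁) := by
  intro P hP hV n _
  have hΦneg : Φinv < 0 := neg_of_normalCDF_lt_half (hΦ ▸ hε.2)
  rw [le_antisymm (epsDispersion_le_condInfoVar hε.2 hW0 (hPstar P)) hV]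
  exact mul_add_sqrt_mul_le_of_gap n.cast_nonneg hβ₁ hΦneg.le (hI P hP) (hVlip P hP)

theorem stmt14 {X Y : Type*} [Fintype X] [Fintype Y] [Nonempty X] [Nonempty Y]
    (W : X → Y → ℝ) (hW0 : ∀ x y, 0 ≤ W x y) (hW1 : ∀ x, ∑ y, W x y = 1)
    (Pstar : (X → ℝ) → (X → ℝ))
    (hPstar : ∀ P, Pstar P ∈ capAchievers W)
    (S : Set (X → ℝ)) (hS : S ⊆ probSimplex X)
    (β₁ β₂ : ℝ) (hβ₁ : 0 < β₁) (hβ₂ : 0 < β₂)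
    (hI : ∀ P ∈ S, mutualInfo P W ≤ capacity W - β₁ * l2dist P (Pstar P) ^ 2)
    (hVlip : ∀ P ∈ S, |Real.sqrt (condInfoVar P W)
      - Real.sqrt (condInfoVar (Pstar P) W)| ≤ β₂ * l2dist P (Pstar P))
    (ε : ℝ) (hε : ε ∈ Set.Ioo (0 : ℝ) (1 / 2))
    (Φinv : ℝ) (hΦ : normalCDF Φinv = ε) :
    ∀ P ∈ S, condInfoVar (Pstar P) W ≤ epsDispersion ε W →
      ∀ n : ℕ, 1 ≤ n →
        (n : ℝ) * mutualInfo P W + Real.sqrt (n * condInfoVar P W) * Φinv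
          ≤ (n : ℝ) * capacity W + Real.sqrt (n * epsDispersion ε W) * Φinv
            + (β₂ * |Φinv|) ^ 2 / (4 * β₁) :=
  stmt14_general W hW0 Pstar hPstar S β₁ β₂ hβ₁ hI hVlip ε hε Φinv hΦ
end
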